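/- arXiv:2409.12057 — 3 statements merged into one kernel-verified Lean document; each statement's English description precedes it below -/
import Mathlib

section
/- With p = softmax(s) and Hess(s_k) = 0 at x, the matrix Hess(p_a) applied to e_b = ∇p_b satisfies Hess(p_a) e_b = (Σ_{k,i} (δ_{ak} − p_k) ∂_i s_k ∂_i p_b) e_a − p_a Σ_{k,i} (∂_i s_k ∂_i p_b) e_k, where e_k = ∇p_k. -/
/-!
Writing `p_a = exp (s_a - log ∑_k exp s_k)` gives the softmax Jacobian
`∇p_a = p_a ∑_k (δ_ak - p_k) ∇s_k`. Differentiating once more, every term carrying a second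
derivative of some `s_k` vanishes at `x`, so `Hess p_a` is the sum of rank-one matrices
`e_a ⊗ ∑_k (δ_ak - p_k) ∇s_k - p_a ∑_k e_k ⊗ ∇s_k`, and applying it to `e_b` is a dot-product
computation.
-/

open Real Matrix

noncomputable def pd {d : ℕ} (f : (Fin d → ℝ) → ℝ) (x : Fin d → ℝ) (i : Fin d) : ℝ :=
  fderiv ℝ f x (Pi.single i 1)

noncomputable def softmax {C : ℕ} (a : Fin C → ℝ) : Fin C → ℝ :=
  fun i => Real.exp (a i) / ∑ k, Real.exp (a k)

noncomputable def grad {d : ℕ} (f : (Fin d → ℝ) → ℝ) (x : Fin d → ℝ) : Fin d → ℝ :=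
  fun i => pd f x i

noncomputable def hess {d : ℕ} (f : (Fin d → ℝ) → ℝ) (x : Fin d → ℝ) :
    Matrix (Fin d) (Fin d) ℝ :=
  Matrix.of fun i j => pd (fun y => pd f y j) x i

lemma sum_exp_pos {C : ℕ} (v : Fin C → ℝ) (a : Fin C) : 0 < ∑ k, exp (v k) :=
  Finset.sum_pos (fun _ _ => exp_pos _) ⟨a, Finset.mem_univ a⟩

lemma softmax_eq_exp_sub_log {C : ℕ} (v : Fin C → ℝ) (a : Fin C) :
    softmax v a = exp (v a - log (∑ k, exp (v k))) := by
  rw [exp_sub, exp_log (sum_exp_pos v a), softmax]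

lemma HasFDerivAt.softmax_comp {E : Type*} [NormedAddCommGroup E] [NormedSpace ℝ E] {C : ℕ}
    {s : E → Fin C → ℝ} {s' : Fin C → E →L[ℝ] ℝ} {x : E}
    (hs : ∀ k, HasFDerivAt (fun y => s y k) (s' k) x) (a : Fin C) :
    HasFDerivAt (fun y => softmax (s y) a)
      (softmax (s x) a • ∑ k, ((if a = k then (1:ℝ) else 0) - softmax (s x) k) • s' k) x := by
  have hZ := HasFDerivAt.fun_sum (u := Finset.univ) fun k _ => (hs k).exp
  have h := ((hs a).fun_sub (hZ.log (sum_exp_pos (s x) a).ne')).exp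
  simp only [← softmax_eq_exp_sub_log] at h
  convert h using 2
  ext v
  simp [sub_mul, Finset.sum_sub_distrib, ite_mul, softmax, div_eq_inv_mul, Finset.mul_sum, mul_assoc]

lemma pd_eq_of_hasFDerivAt {d : ℕ} {f : (Fin d → ℝ) → ℝ} {f' : (Fin d → ℝ) →L[ℝ] ℝ}
    {x : Fin d → ℝ} (h : HasFDerivAt f f' x) (i : Fin d) : pd f x i = f' (Pi.single i 1) := by
  rw [pd, h.fderiv]

lemma differentiable_pd {d : ℕ} {f : (Fin d → ℝ) → ℝ} (hf : ContDiff ℝ 2 f) (i : Fin d) :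
    Differentiable ℝ (fun y => pd f y i) :=
  ((hf.fderiv_right (m := 1) (by norm_num)).clm_apply contDiff_const).differentiable
    (by norm_num)

lemma pd_softmax_comp {d C : ℕ} {s : (Fin d → ℝ) → Fin C → ℝ} {y : Fin d → ℝ}
    (hs : ∀ k, DifferentiableAt ℝ (fun z => s z k) y) (a : Fin C) (i : Fin d) :
    pd (fun z => softmax (s z) a) y i = softmax (s y) a *
      ∑ k, ((if a = k then (1:ℝ) else 0) - softmax (s y) k) * pd (fun z => s z k) y i := by
  rw [pd_eq_of_hasFDerivAt (HasFDerivAt.softmax_comp (fun k => (hs k).hasFDerivAt) a)]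
  simp [pd]

lemma hess_softmax_comp {d C : ℕ} {s : (Fin d → ℝ) → Fin C → ℝ} {x : Fin d → ℝ}
    (hs : ∀ k, ContDiff ℝ 2 (fun y => s y k)) (hhess : ∀ k, hess (fun y => s y k) x = 0)
    (a : Fin C) :
    hess (fun y => softmax (s y) a) x =
      vecMulVec (grad (fun y => softmax (s y) a) x)
          (∑ k, ((if a = k then (1:ℝ) else 0) - softmax (s x) k) • grad (fun y => s y k) x)
        - softmax (s x) a •
          ∑ k, vecMulVec (grad (fun y => softmax (s y) k) x) (grad (fun y => s y k) x) := by
  have hds k : Differentiable ℝ (fun y => s y k) := (hs k).differentiable (by norm_num)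
  have hp k : HasFDerivAt (fun y => softmax (s y) k) (fderiv ℝ (fun y => softmax (s y) k) x) x :=
    (HasFDerivAt.softmax_comp (fun k => (hds k x).hasFDerivAt) k).differentiableAt.hasFDerivAt
  ext i j
  have hq k : HasFDerivAt (fun y => pd (fun z => s z k) y j)
      (fderiv ℝ (fun y => pd (fun z => s z k) y j) x) x :=
    (differentiable_pd (hs k) j x).hasFDerivAt
  have hq0 k : fderiv ℝ (fun y => pd (fun z => s z k) y j) x (Pi.single i 1) = 0 :=
    congrFun (congrFun (hhess k) i) j
  have hrw : (fun y => pd (fun z => softmax (s z) a) y j) = fun y => softmax (s y) a *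
      ∑ k, ((if a = k then (1:ℝ) else 0) - softmax (s y) k) * pd (fun z => s z k) y j :=
    funext fun y => pd_softmax_comp (fun k => hds k y) a j
  have h := (hp a).fun_mul (HasFDerivAt.fun_sum (u := Finset.univ) fun k _ =>
    ((hasFDerivAt_const (if a = k then (1:ℝ) else 0) x).fun_sub (hp k)).fun_mul (hq k))
  rw [hess, of_apply, hrw, pd_eq_of_hasFDerivAt h]
  simp only [_root_.add_apply, _root_.smul_apply, _root_.sum_apply, _root_.neg_apply, zero_sub,
    smul_neg, hq0, smul_eq_mul, mul_zero, zero_add, Finset.sum_neg_distrib, mul_neg,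
    Matrix.sub_apply, Matrix.smul_apply]
  simp [vecMulVec, grad, pd, Matrix.sum_apply, Finset.mul_sum, Finset.sum_mul,
    ← Finset.sum_neg_distrib, ← Finset.sum_add_distrib, ← Finset.sum_sub_distrib]
  exact Finset.sum_congr rfl fun k _ => by ring

/-- Action of the Hessian of p_a on the frame vector e_b = ∇p_b. -/
theorem stmt10 (d C : ℕ) (s : (Fin d → ℝ) → Fin C → ℝ)
    (hs : ∀ k, ContDiff ℝ 2 (fun y => s y k)) (x : Fin d → ℝ)
    (hhess : ∀ k, hess (fun y => s y k) x = 0) (a b : Fin C) :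
    (hess (fun y => softmax (s y) a) x).mulVec (grad (fun y => softmax (s y) b) x)
      = (∑ k, ∑ i, ((if a = k then (1:ℝ) else 0) - softmax (s x) k) *
            pd (fun y => s y k) x i * pd (fun y => softmax (s y) b) x i) •
          grad (fun y => softmax (s y) a) x
        - softmax (s x) a •
          ∑ k, (∑ i, pd (fun y => s y k) x i * pd (fun y => softmax (s y) b) x i) •
            grad (fun y => softmax (s y) k) x := by
  rw [hess_softmax_comp hs hhess a, sub_mulVec, smul_mulVec, sum_mulVec]
  simp only [vecMulVec_mulVec, op_smul_eq_smul, sum_dotProduct, smul_dotProduct, smul_eq_mul]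
  simp only [dotProduct, grad, mul_assoc, Finset.mul_sum]
end

section
/- With D = J(s)^T (P − pp^T) J(s) and Hess(s_k)=0 at x, the directional derivative of D along e_a = ∇p_a satisfies e_a(D)(x) = J(s)^T A_a J(s), where (A_a)_{kl} = Σ_i ∂_i p_a [(δ_{kl} − p_l) ∂_i p_k − p_k ∂_i p_l]. -/
open Real Matrix

/-- Jacobian of the score function. -/
noncomputable def Js {d C : ℕ} (s : (Fin d → ℝ) → Fin C → ℝ) (y : Fin d → ℝ) :
    Matrix (Fin C) (Fin d) ℝ :=
  Matrix.of fun k i => pd (fun z => s z k) y i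

/-- The data information matrix D = J(s)ᵀ (P − ppᵀ) J(s). -/
noncomputable def Dmat {d C : ℕ} (s : (Fin d → ℝ) → Fin C → ℝ) (y : Fin d → ℝ) :
    Matrix (Fin d) (Fin d) ℝ :=
  (Js s y)ᵀ * (Matrix.diagonal (softmax (s y))
      - Matrix.vecMulVec (softmax (s y)) (softmax (s y))) * Js s y

/-- The matrix A_a. -/
noncomputable def Amat {d C : ℕ} (s : (Fin d → ℝ) → Fin C → ℝ) (a : Fin C)
    (x : Fin d → ℝ) : Matrix (Fin C) (Fin C) ℝ :=
  Matrix.of fun k l => ∑ i, pd (fun y => softmax (s y) a) x i *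
    (((if k = l then (1:ℝ) else 0) - softmax (s x) l) * pd (fun y => softmax (s y) k) x i
      - softmax (s x) k * pd (fun y => softmax (s y) l) x i)

/-! Entrywise, `D = Jᵀ M J` with `M = P - p pᵀ`. Vanishing Hessians of the scores make the
Jacobian `J` stationary at `x`, so there `∂ₘ D = Jᵀ (∂ₘ M) J` with
`∂ₘ M = diag (∂ₘ p) - ∂ₘ p pᵀ - p (∂ₘ p)ᵀ`. Contracting with `∂ₘ p_a` is linear in `∂ₘ M`, and
`∑ₘ ∂ₘ p_a • ∂ₘ M` is exactly `A_a`. -/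

section PartialDerivatives

variable {d : ℕ} {x : Fin d → ℝ}

lemma pd_const_mul {f : (Fin d → ℝ) → ℝ} (hf : DifferentiableAt ℝ f x) (c : ℝ) (m : Fin d) :
    pd (fun y => c * f y) x m = c * pd f x m := by
  simp [pd, fderiv_const_mul hf]

lemma pd_mul {f g : (Fin d → ℝ) → ℝ} (hf : DifferentiableAt ℝ f x)
    (hg : DifferentiableAt ℝ g x) (m : Fin d) :
    pd (fun y => f y * g y) x m = pd f x m * g x + f x * pd g x m := by
  simp only [pd, fderiv_fun_mul hf hg, _root_.add_apply, _root_.smul_apply,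
    smul_eq_mul]
  ring

lemma pd_sub {f g : (Fin d → ℝ) → ℝ} (hf : DifferentiableAt ℝ f x)
    (hg : DifferentiableAt ℝ g x) (m : Fin d) :
    pd (fun y => f y - g y) x m = pd f x m - pd g x m := by
  simp [pd, fderiv_fun_sub hf hg]

lemma pd_sum {ι : Type*} (t : Finset ι) {f : ι → (Fin d → ℝ) → ℝ}
    (hf : ∀ k ∈ t, DifferentiableAt ℝ (f k) x) (m : Fin d) :
    pd (fun y => ∑ k ∈ t, f k y) x m = ∑ k ∈ t, pd (f k) x m := by
  simp [pd, fderiv_fun_sum hf]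

lemma differentiable_pd_of_contDiff_two {f : (Fin d → ℝ) → ℝ} (hf : ContDiff ℝ 2 f)
    (i : Fin d) : Differentiable ℝ (fun y => pd f y i) := fun y =>
  (((hf.fderiv_right (m := 1) (by norm_num)).differentiable one_ne_zero) y).clm_apply
    (differentiableAt_const _)

lemma differentiableAt_softmax_apply {C : ℕ} {s : (Fin d → ℝ) → Fin C → ℝ}
    (hs : ∀ k, DifferentiableAt ℝ (fun y => s y k) x) (c : Fin C) :
    DifferentiableAt ℝ (fun y => softmax (s y) c) x := by
  have hpos : 0 < ∑ k, Real.exp (s x k) :=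
    Finset.sum_pos (fun k _ => Real.exp_pos _) ⟨c, Finset.mem_univ c⟩
  have hden : DifferentiableAt ℝ (fun y => ∑ k, Real.exp (s y k)) x :=
    DifferentiableAt.fun_sum fun k _ => (hs k).exp
  simp only [softmax, div_eq_mul_inv]
  exact (hs c).exp.mul (hden.inv hpos.ne')

end PartialDerivatives

section MatrixPartialDerivatives

variable {d : ℕ} {x : Fin d → ℝ} {ι κ ν : Type*}

noncomputable def pdMat (A : (Fin d → ℝ) → Matrix ι κ ℝ) (x : Fin d → ℝ) (m : Fin d) :
    Matrix ι κ ℝ :=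
  Matrix.of fun k l => pd (fun y => A y k l) x m

lemma differentiableAt_mul_apply [Fintype κ] {A : (Fin d → ℝ) → Matrix ι κ ℝ}
    {B : (Fin d → ℝ) → Matrix κ ν ℝ} (hA : ∀ k l, DifferentiableAt ℝ (fun y => A y k l) x)
    (hB : ∀ k l, DifferentiableAt ℝ (fun y => B y k l) x) (k : ι) (l : ν) :
    DifferentiableAt ℝ (fun y => (A y * B y) k l) x := by
  simp only [Matrix.mul_apply]
  exact DifferentiableAt.fun_sum fun r _ => (hA k r).mul (hB r l)

lemma pdMat_mul [Fintype κ] {A : (Fin d → ℝ) → Matrix ι κ ℝ} {B : (Fin d → ℝ) → Matrix κ ν ℝ}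
    (hA : ∀ k l, DifferentiableAt ℝ (fun y => A y k l) x)
    (hB : ∀ k l, DifferentiableAt ℝ (fun y => B y k l) x) (m : Fin d) :
    pdMat (fun y => A y * B y) x m = pdMat A x m * B x + A x * pdMat B x m := by
  ext k l
  simp only [pdMat, Matrix.of_apply, Matrix.add_apply, Matrix.mul_apply]
  rw [pd_sum (f := fun r y => A y k r * B y r l) _ fun r _ => (hA k r).fun_mul (hB r l),
    ← Finset.sum_add_distrib]
  exact Finset.sum_congr rfl fun r _ => pd_mul (hA k r) (hB r l) m

lemma pdMat_transpose_mul_mul_of_pdMat_eq_zero [Fintype κ] {A : (Fin d → ℝ) → Matrix κ ν ℝ}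
    {M : (Fin d → ℝ) → Matrix κ κ ℝ} (hA : ∀ k l, DifferentiableAt ℝ (fun y => A y k l) x)
    (hM : ∀ k l, DifferentiableAt ℝ (fun y => M y k l) x) (m : Fin d)
    (hA0 : pdMat A x m = 0) :
    pdMat (fun y => (A y)ᵀ * M y * A y) x m = (A x)ᵀ * pdMat M x m * A x := by
  have hAT : ∀ k l, DifferentiableAt ℝ (fun y => (A y)ᵀ k l) x := fun k l => hA l k
  have hAT0 : pdMat (fun y => (A y)ᵀ) x m = 0 := by
    rw [← Matrix.transpose_eq_zero, ← hA0]
    rfl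
  rw [pdMat_mul (differentiableAt_mul_apply hAT hM) hA, pdMat_mul hAT hM, hA0, hAT0]
  simp

lemma pdMat_diagonal_sub_vecMulVec [DecidableEq κ] {p : (Fin d → ℝ) → κ → ℝ}
    (hp : ∀ k, DifferentiableAt ℝ (fun y => p y k) x) (m : Fin d) :
    pdMat (fun y => Matrix.diagonal (p y) - Matrix.vecMulVec (p y) (p y)) x m =
      Matrix.diagonal (fun k => pd (fun y => p y k) x m)
        - Matrix.vecMulVec (fun k => pd (fun y => p y k) x m) (p x)
        - Matrix.vecMulVec (p x) (fun k => pd (fun y => p y k) x m) := by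
  ext k l
  have hdiag : ∀ y, Matrix.diagonal (p y) k l = (if k = l then 1 else 0) * p y k := by
    intro y
    by_cases hkl : k = l <;> simp [hkl]
  simp only [pdMat, Matrix.of_apply, Matrix.sub_apply, Matrix.vecMulVec_apply, hdiag]
  rw [pd_sub ((hp k).const_mul _) ((hp k).fun_mul (hp l)), pd_const_mul (hp k),
    pd_mul (hp k) (hp l), Matrix.diagonal_apply]
  split_ifs <;> ring

end MatrixPartialDerivatives

lemma Amat_eq_sum_smul_pdMat {d C : ℕ} {s : (Fin d → ℝ) → Fin C → ℝ} {x : Fin d → ℝ}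
    (hp : ∀ k, DifferentiableAt ℝ (fun y => softmax (s y) k) x) (a : Fin C) :
    Amat s a x = ∑ m, pd (fun y => softmax (s y) a) x m •
      pdMat (fun y => Matrix.diagonal (softmax (s y))
        - Matrix.vecMulVec (softmax (s y)) (softmax (s y))) x m := by
  ext k l
  simp only [pdMat_diagonal_sub_vecMulVec hp, Amat, Matrix.of_apply, Matrix.sum_apply,
    Matrix.smul_apply, Matrix.sub_apply, Matrix.diagonal_apply, Matrix.vecMulVec_apply,
    smul_eq_mul]
  refine Finset.sum_congr rfl fun m _ => ?_
  split_ifs <;> ring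

lemma sum_mul_transpose_mul_mul_apply {ι κ ν : Type*} [Fintype ι] [Fintype κ]
    (J : Matrix κ ν ℝ) (c : ι → ℝ) (N : ι → Matrix κ κ ℝ) (i j : ν) :
    ∑ m, c m * (Jᵀ * N m * J) i j = (Jᵀ * (∑ m, c m • N m) * J) i j := by
  simp only [Matrix.mul_sum, Matrix.sum_mul, Matrix.mul_smul, Matrix.smul_mul,
    Matrix.sum_apply, Matrix.smul_apply, smul_eq_mul]

/-- Directional derivative of the data information matrix along e_a = ∇p_a. -/
theorem stmt13 (d C : ℕ) (s : (Fin d → ℝ) → Fin C → ℝ)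
    (hs : ∀ k, ContDiff ℝ 2 (fun y => s y k)) (x : Fin d → ℝ)
    (hhess : ∀ k, hess (fun y => s y k) x = 0) (a : Fin C) (i j : Fin d) :
    ∑ m, pd (fun y => softmax (s y) a) x m * pd (fun y => Dmat s y i j) x m
      = ((Js s x)ᵀ * Amat s a x * Js s x) i j := by
  have hJ : ∀ k l, DifferentiableAt ℝ (fun y => Js s y k l) x := fun k l =>
    differentiable_pd_of_contDiff_two (hs k) l x
  have hJ0 : ∀ m, pdMat (Js s) x m = 0 := fun m => by
    ext k l
    exact congrFun (congrFun (hhess k) m) l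
  have hp : ∀ k, DifferentiableAt ℝ (fun y => softmax (s y) k) x :=
    differentiableAt_softmax_apply fun k => (hs k).differentiable two_ne_zero x
  have hM : ∀ k l, DifferentiableAt ℝ (fun y =>
      (Matrix.diagonal (softmax (s y)) - Matrix.vecMulVec (softmax (s y)) (softmax (s y))) k l) x :=
    fun k l => by
      simp only [Matrix.sub_apply, Matrix.diagonal_apply, Matrix.vecMulVec_apply]
      split_ifs <;> fun_prop
  rw [Amat_eq_sum_smul_pdMat hp, ← sum_mul_transpose_mul_mul_apply]
  refine Finset.sum_congr rfl fun m _ => congrArg _ ?_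
  exact congrFun (congrFun (pdMat_transpose_mul_mul_of_pdMat_eq_zero hJ hM m (hJ0 m)) i) j
end

section
/- Under the assumptions p = softmax(s), Hess(s_k) = 0 at x, the directional derivative e_a(g^D(e_b, e_c)) equals M_{a,c,b} + M_{a,b,c} + (J(s) e_b)^T A_a J(s) e_c, where M_{a,b,c} = (Hess(p_b) e_a)^T J(s)^T (P − pp^T) J(s) e_c and (A_a)_{kl} = Σ_i ∂_i p_a [(δ_{kl} − p_l) ∂_i p_k − p_k ∂_i p_l]. -/
open Real Matrix

/-- The expression M_{a,b,c} = (Hess(p_b) e_a)ᵀ J(s)ᵀ (P − ppᵀ) J(s) e_c. -/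
noncomputable def Mabc {d C : ℕ} (s : (Fin d → ℝ) → Fin C → ℝ) (a b c : Fin C)
    (x : Fin d → ℝ) : ℝ :=
  ((hess (fun y => softmax (s y) b) x).mulVec (grad (fun y => softmax (s y) a) x)) ⬝ᵥ
    (Dmat s x).mulVec (grad (fun y => softmax (s y) c) x)

/-
The left side is the derivative of the bilinear form `u ⬝ᵥ D *ᵥ v`, with `u = ∇p_b`,
`v = ∇p_c`, in the direction `∇p_a`, so the Leibniz rule splits it into three terms. Differentiating
`∇p_b` and `∇p_c` gives `Hess(p_b) e_a` and `Hess(p_c) e_a` (Hessians of `C²` functions are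
symmetric), and by symmetry of `D` these terms are the two `M` terms. Since `Hess(s_k) = 0` at `x`, the Jacobian `J(s)` is stationary there, so only the
middle factor `P − ppᵀ` of `D = J(s)ᵀ (P − ppᵀ) J(s)` contributes, and its directional derivative
along `∇p_a` is exactly `A_a`.
-/

open Finset

section Calculus

variable {d : ℕ}

theorem sum_mul_pd_eq_fderiv (f : (Fin d → ℝ) → ℝ) (x w : Fin d → ℝ) :
    ∑ i, w i * pd f x i = fderiv ℝ f x w := by
  conv_rhs => rw [pi_eq_sum_univ' w]
  simp [pd, map_sum, map_smul]

theorem fderiv_pd_eq_zero_of_hess_eq_zero {f : (Fin d → ℝ) → ℝ} {x : Fin d → ℝ}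
    (hf : hess f x = 0) (i : Fin d) (w : Fin d → ℝ) :
    fderiv ℝ (fun y => pd f y i) x w = 0 := by
  rw [← sum_mul_pd_eq_fderiv]
  have h : ∀ m, pd (fun y => pd f y i) x m = 0 := fun m => congrFun (congrFun hf m) i
  simp [h]

theorem hess_isSymm {f : (Fin d → ℝ) → ℝ} (hf : ContDiff ℝ 2 f) (x : Fin d → ℝ) :
    (hess f x).IsSymm := by
  have h1 : DifferentiableAt ℝ (fderiv ℝ f) x :=
    ((hf.fderiv_right (m := 1) le_rfl).differentiable one_ne_zero) x
  ext i j
  simp only [hess, transpose_apply, of_apply, pd,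
    fderiv_clm_apply h1 (differentiableAt_const _)]
  simp only [fderiv_fun_const, Pi.zero_apply, ContinuousLinearMap.comp_zero, zero_add,
    ContinuousLinearMap.flip_apply]
  exact hf.contDiffAt.isSymmSndFDerivAt (by norm_num) _ _

theorem fderiv_grad {f : (Fin d → ℝ) → ℝ} (hf : ContDiff ℝ 2 f) (x w : Fin d → ℝ) :
    (fun i => fderiv ℝ (fun y => grad f y i) x w) = hess f x *ᵥ w := by
  ext i
  rw [← sum_mul_pd_eq_fderiv]
  simp only [mulVec, dotProduct, ← (hess_isSymm hf x).apply i]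
  simp [grad, hess, mul_comm]

theorem differentiableAt_pd {f : (Fin d → ℝ) → ℝ} (hf : ContDiff ℝ 2 f) (x : Fin d → ℝ)
    (i : Fin d) : DifferentiableAt ℝ (fun y => pd f y i) x :=
  (((hf.fderiv_right (m := 1) le_rfl).differentiable one_ne_zero) x).clm_apply
    (differentiableAt_const _)

end Calculus

section Leibniz

variable {E : Type*} [NormedAddCommGroup E] [NormedSpace ℝ E] {m n : Type*} [Fintype m]
  [Fintype n] {u : E → m → ℝ} {M : E → Matrix m n ℝ} {v : E → n → ℝ} {x : E}

theorem differentiableAt_dotProduct_mulVec (hu : ∀ i, DifferentiableAt ℝ (fun y => u y i) x)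
    (hM : ∀ i j, DifferentiableAt ℝ (fun y => M y i j) x)
    (hv : ∀ j, DifferentiableAt ℝ (fun y => v y j) x) :
    DifferentiableAt ℝ (fun y => u y ⬝ᵥ M y *ᵥ v y) x := by
  simp only [dotProduct, mulVec]
  fun_prop

theorem fderiv_dotProduct_mulVec (hu : ∀ i, DifferentiableAt ℝ (fun y => u y i) x)
    (hM : ∀ i j, DifferentiableAt ℝ (fun y => M y i j) x)
    (hv : ∀ j, DifferentiableAt ℝ (fun y => v y j) x) (w : E) :
    fderiv ℝ (fun y => u y ⬝ᵥ M y *ᵥ v y) x w =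
      (fun i => fderiv ℝ (fun y => u y i) x w) ⬝ᵥ M x *ᵥ v x
        + u x ⬝ᵥ (of fun i j => fderiv ℝ (fun y => M y i j) x w) *ᵥ v x
        + u x ⬝ᵥ M x *ᵥ (fun j => fderiv ℝ (fun y => v y j) x w) := by
  simp only [dotProduct, mulVec]
  rw [(HasFDerivAt.fun_sum fun i _ => (hu i).hasFDerivAt.fun_mul
    (HasFDerivAt.fun_sum fun j _ => (hM i j).hasFDerivAt.fun_mul (hv j).hasFDerivAt)).fderiv]
  simp only [_root_.sum_apply, _root_.add_apply, _root_.smul_apply, smul_eq_mul, of_apply,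
    mul_add, mul_sum, sum_mul, ← sum_add_distrib]
  exact sum_congr rfl fun i _ => sum_congr rfl fun j _ => by ring

end Leibniz

theorem contDiff_softmax_apply {E : Type*} [NormedAddCommGroup E] [NormedSpace ℝ E] {C : ℕ}
    {s : E → Fin C → ℝ} {n : WithTop ℕ∞} (hs : ∀ k, ContDiff ℝ n (fun y => s y k)) (k : Fin C) :
    ContDiff ℝ n (fun y => softmax (s y) k) :=
  ((hs k).exp).div (ContDiff.sum fun l _ => (hs l).exp) fun _ =>
    (sum_pos (fun _ _ => exp_pos _) ⟨k, mem_univ k⟩).ne'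

section CovMat

variable {n : Type*} [DecidableEq n]

def covMat (p : n → ℝ) : Matrix n n ℝ :=
  diagonal p - vecMulVec p p

theorem covMat_isSymm (p : n → ℝ) : (covMat p).IsSymm :=
  (isSymm_diagonal p).sub (transpose_vecMulVec p p)

theorem covMat_apply (p : n → ℝ) (k l : n) :
    covMat p k l = (if k = l then p k else 0) - p k * p l := by
  simp [covMat, diagonal_apply, vecMulVec_apply]

theorem differentiableAt_covMat_apply {E : Type*} [NormedAddCommGroup E] [NormedSpace ℝ E]
    {p : E → n → ℝ} {x : E} (hp : ∀ k, DifferentiableAt ℝ (fun y => p y k) x) (k l : n) :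
    DifferentiableAt ℝ (fun y => covMat (p y) k l) x := by
  simp only [covMat_apply]
  split_ifs
  exacts [(hp k).sub ((hp k).fun_mul (hp l)),
    (differentiableAt_const 0).sub ((hp k).fun_mul (hp l))]

theorem fderiv_covMat_apply {E : Type*} [NormedAddCommGroup E] [NormedSpace ℝ E]
    {p : E → n → ℝ} {x : E} (hp : ∀ k, DifferentiableAt ℝ (fun y => p y k) x) (k l : n) (w : E) :
    fderiv ℝ (fun y => covMat (p y) k l) x w =
      ((if k = l then 1 else 0) - p x l) * fderiv ℝ (fun y => p y k) x w
        - p x k * fderiv ℝ (fun y => p y l) x w := by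
  have hdiag : DifferentiableAt ℝ (fun y => if k = l then p y k else 0) x := by
    split_ifs
    exacts [hp k, differentiableAt_const 0]
  simp only [covMat_apply]
  rw [fderiv_fun_sub hdiag ((hp k).fun_mul (hp l)), fderiv_fun_mul (hp k) (hp l)]
  split_ifs with hkl
  · subst hkl
    simp only [_root_.sub_apply, _root_.add_apply, _root_.smul_apply, smul_eq_mul]
    ring
  · simp only [fderiv_fun_const, Pi.zero_apply, zero_sub, _root_.neg_apply, _root_.add_apply,
      _root_.smul_apply, smul_eq_mul]
    ring

end CovMat

theorem Matrix.transpose_mul_mul_apply {m n R : Type*} [Fintype m] [CommSemiring R]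
    (A : Matrix m n R) (B : Matrix m m R) (i j : n) :
    (Aᵀ * B * A) i j = (fun k => A k i) ⬝ᵥ B *ᵥ (fun k => A k j) := by
  simp only [mul_apply, transpose_apply, dotProduct, mulVec, sum_mul, mul_sum]
  rw [sum_comm]
  exact sum_congr rfl fun k _ => sum_congr rfl fun l _ => by ring

theorem Matrix.IsSymm.transpose_mul_mul {m n R : Type*} [Fintype m] [CommSemiring R]
    {B : Matrix m m R} (hB : B.IsSymm) (A : Matrix m n R) : (Aᵀ * B * A).IsSymm := by
  rw [IsSymm, transpose_mul, transpose_mul, hB.eq, transpose_transpose, Matrix.mul_assoc]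

theorem Matrix.IsSymm.dotProduct_mulVec_comm {n R : Type*} [Fintype n] [CommSemiring R]
    {M : Matrix n n R} (hM : M.IsSymm) (u v : n → R) : u ⬝ᵥ M *ᵥ v = v ⬝ᵥ M *ᵥ u := by
  rw [← dotProduct_transpose_mulVec, hM.eq]

theorem Matrix.dotProduct_transpose_mul_mul_mulVec {m n R : Type*} [Fintype m] [Fintype n]
    [CommSemiring R] (A : Matrix m n R) (B : Matrix m m R) (u v : n → R) :
    u ⬝ᵥ (Aᵀ * B * A) *ᵥ v = (A *ᵥ u) ⬝ᵥ B *ᵥ (A *ᵥ v) := by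
  rw [← mulVec_mulVec, ← mulVec_mulVec, dotProduct_transpose_mulVec, dotProduct_comm]

section Dmat

variable {d C : ℕ} (s : (Fin d → ℝ) → Fin C → ℝ)

theorem Dmat_eq (y : Fin d → ℝ) : Dmat s y = (Js s y)ᵀ * covMat (softmax (s y)) * Js s y := rfl

theorem Dmat_isSymm (y : Fin d → ℝ) : (Dmat s y).IsSymm :=
  (covMat_isSymm _).transpose_mul_mul _

variable {s}

theorem differentiableAt_Dmat_apply (hs : ∀ k, ContDiff ℝ 2 (fun y => s y k)) (x : Fin d → ℝ)
    (i j : Fin d) : DifferentiableAt ℝ (fun y => Dmat s y i j) x := by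
  simp only [Dmat_eq, transpose_mul_mul_apply, Js, of_apply]
  exact differentiableAt_dotProduct_mulVec (fun k => differentiableAt_pd (hs k) x i)
    (differentiableAt_covMat_apply fun k =>
      (contDiff_softmax_apply hs k).differentiable two_ne_zero x)
    (fun k => differentiableAt_pd (hs k) x j)

theorem fderiv_Dmat (hs : ∀ k, ContDiff ℝ 2 (fun y => s y k)) {x : Fin d → ℝ}
    (hhess : ∀ k, hess (fun y => s y k) x = 0) (w : Fin d → ℝ) :
    (of fun i j => fderiv ℝ (fun y => Dmat s y i j) x w) =
      (Js s x)ᵀ * (of fun k l => fderiv ℝ (fun y => covMat (softmax (s y)) k l) x w) * Js s x := by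
  ext i j
  simp only [Dmat_eq, transpose_mul_mul_apply, Js, of_apply]
  rw [fderiv_dotProduct_mulVec (fun k => differentiableAt_pd (hs k) x i)
    (differentiableAt_covMat_apply fun k =>
      (contDiff_softmax_apply hs k).differentiable two_ne_zero x)
    (fun k => differentiableAt_pd (hs k) x j)]
  simp [fderiv_pd_eq_zero_of_hess_eq_zero (hhess _), ← Pi.zero_def]

theorem Amat_eq {x : Fin d → ℝ} (hp : ∀ k, DifferentiableAt ℝ (fun y => softmax (s y) k) x)
    (a : Fin C) :
    Amat s a x = of fun k l =>
      fderiv ℝ (fun y => covMat (softmax (s y)) k l) x (grad (fun y => softmax (s y) a) x) := by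
  ext k l
  rw [of_apply, fderiv_covMat_apply hp, ← sum_mul_pd_eq_fderiv, ← sum_mul_pd_eq_fderiv]
  simp only [Amat, of_apply, grad, mul_sum, ← sum_sub_distrib]
  exact sum_congr rfl fun i _ => by ring

end Dmat

/-- Product-rule expansion of e_a(g^D(e_b, e_c)). -/
theorem stmt19 (d C : ℕ) (s : (Fin d → ℝ) → Fin C → ℝ)
    (hs : ∀ k, ContDiff ℝ 2 (fun y => s y k)) (x : Fin d → ℝ)
    (hhess : ∀ k, hess (fun y => s y k) x = 0) (a b c : Fin C) :
    ∑ i, grad (fun y => softmax (s y) a) x i *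
        pd (fun y => (grad (fun z => softmax (s z) b) y) ⬝ᵥ
          (Dmat s y).mulVec (grad (fun z => softmax (s z) c) y)) x i
      = Mabc s a c b x + Mabc s a b c x
        + ((Js s x).mulVec (grad (fun y => softmax (s y) b) x)) ⬝ᵥ
            (Amat s a x).mulVec ((Js s x).mulVec (grad (fun y => softmax (s y) c) x)) := by
  have hp : ∀ k, ContDiff ℝ 2 (fun y => softmax (s y) k) := contDiff_softmax_apply hs
  have hgrad : ∀ k i, DifferentiableAt ℝ (fun y => grad (fun z => softmax (s z) k) y i) x :=
    fun k => differentiableAt_pd (hp k) x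
  rw [sum_mul_pd_eq_fderiv, fderiv_dotProduct_mulVec (hgrad b) (differentiableAt_Dmat_apply hs x)
    (hgrad c), fderiv_grad (hp b), fderiv_grad (hp c), fderiv_Dmat hs hhess,
    ← Amat_eq fun k => (hp k).differentiable two_ne_zero x, dotProduct_transpose_mul_mul_mulVec,
    Mabc, Mabc, (Dmat_isSymm s x).dotProduct_mulVec_comm _ (hess _ x *ᵥ _)]
  ring
end
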